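/- Let f be differentiable on (a,b) with |f'| convex on [a,b], g : [a,b] → ℝ continuous, α > 0. Then f((a+b)/2)[ −J_{a+}^α g(b) − J_{b-}^α g(a) + J_{((a+b)/2)+}^α g(b) + J_{((a+b)/2)-}^α g(a) + ((b-a)^{α-1}/Γ(α)) ∫_a^b g(s) ds ] + J_{a+}^α (gf)(b) + J_{b-}^α (gf)(a) − J_{((a+b)/2)+}^α (gf)(b) − J_{((a+b)/2)-}^α (gf)(a) − ((b-a)^{α-1}/Γ(α)) ∫_a^b g(t) f(t) dt ≤ (‖g‖_{∞,[a,(a+b)/2]}/((b-a)Γ(α))) ∫_a^{(a+b)/2} [ ∫_a^t ((b-a)^{α-1} − (b-s)^{α-1} + (s-a)^{α-1}) ds ] ((b-t)|f'(a)| + (t-a)|f'(b)|) dt + (‖g‖_{∞,[(a+b)/2,b]}/((b-a)Γ(α))) ∫_{(a+b)/2}^b [ ∫_t^b ((b-s)^{α-1} − (s-a)^{α-1} + (b-a)^{α-1}) ds ] ((b-t)|f'(a)| + (t-a)|f'(b)|) dt. -/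

import Mathlib

/-!
Write `m = (a + b) / 2` and `c = (b - a) ^ (α - 1)`. Since `f` is only differentiable on the open
interval, it is first replaced by its continuous version `f m + ∫ s in m..t, f' s`, which changes
none of the integrals. By linearity the left-hand side equals `Γ(α)⁻¹` times
`∫ t in a..m, ((b - t) ^ (α - 1) - c) g t (f t - f m)`
  `+ ∫ t in m..b, ((t - a) ^ (α - 1) - c) g t (f t - f m)`.
On each half, integration by parts against the factor `f t - f m`, which vanishes at `m`, turns
the integral into one of a primitive of the kernel times `f'`. That primitive is at most
`‖g‖_∞` times the primitive of the comparison kernel, by the elementary inequality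
`|x ^ p - (x + y) ^ p| ≤ (x + y) ^ p - x ^ p + y ^ p` for `0 ≤ y ≤ x`, `p ≥ -1`, and `|f'|` lies
below its chord on `[a, b]` by convexity.
-/

open MeasureTheory intervalIntegral Set

theorem ConvexOn.le_chord {φ : ℝ → ℝ} {a b x : ℝ} (hφ : ConvexOn ℝ (Icc a b) φ) (hab : a < b)
    (hx : x ∈ Icc a b) : φ x ≤ ((b - x) * φ a + (x - a) * φ b) / (b - a) := by
  have hba : 0 < b - a := sub_pos.2 hab
  have hx_eq : ((b - x) / (b - a)) • a + ((x - a) / (b - a)) • b = x := by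
    simp only [smul_eq_mul]; field_simp; ring
  have key := hφ.2 (left_mem_Icc.2 hab.le) (right_mem_Icc.2 hab.le)
    (div_nonneg (sub_nonneg.2 hx.2) hba.le) (div_nonneg (sub_nonneg.2 hx.1) hba.le)
    (by field_simp; ring)
  rw [hx_eq, smul_eq_mul, smul_eq_mul] at key
  calc φ x ≤ _ := key
    _ = _ := by field_simp

theorem abs_rpow_sub_rpow_add_le {x y p : ℝ} (hx : 0 < x) (hy : 0 ≤ y) (hyx : y ≤ x)
    (hp : -1 ≤ p) : |x ^ p - (x + y) ^ p| ≤ (x + y) ^ p - x ^ p + y ^ p := by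
  have hy_p : 0 ≤ y ^ p := Real.rpow_nonneg hy p
  rcases le_or_gt 0 p with hp0 | hp0
  · have : x ^ p ≤ (x + y) ^ p := Real.rpow_le_rpow hx.le (by linarith) hp0
    rw [abs_of_nonpos (by linarith)]
    linarith
  have hxy : (x + y) ^ p ≤ x ^ p := Real.rpow_le_rpow_of_nonpos hx (by linarith) hp0.le
  rw [abs_of_nonneg (by linarith)]
  rcases hy.eq_or_lt with rfl | hy0
  · simp [Real.zero_rpow hp0.ne]
  have h_le_y : x ^ p ≤ y ^ p := Real.rpow_le_rpow_of_nonpos hy0 hyx hp0.le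
  -- `x` is at least the midpoint `(x + y) / 2`, and `2 ^ p ≥ 1 / 2` since `p ≥ -1`
  have h_le_sum : x ^ p ≤ 2 * (x + y) ^ p := by
    have h2 : (2 : ℝ)⁻¹ ≤ 2 ^ p := by
      simpa [Real.rpow_neg_one] using Real.rpow_le_rpow_of_exponent_le one_le_two hp
    calc x ^ p ≤ ((x + y) / 2) ^ p :=
          Real.rpow_le_rpow_of_nonpos (by positivity) (by linarith) hp0.le
      _ = (x + y) ^ p / 2 ^ p := Real.div_rpow (by linarith) zero_le_two p
      _ ≤ 2 * (x + y) ^ p := by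
          rw [div_le_iff₀ (by positivity)]
          nlinarith [Real.rpow_nonneg (by linarith : 0 ≤ x + y) p]
  linarith

theorem intervalIntegrable_rpow_sub {b r : ℝ} (hr : -1 < r) (c d : ℝ) :
    IntervalIntegrable (fun t => (b - t) ^ r) volume c d := by
  simpa only [sub_sub_cancel] using
    (intervalIntegral.intervalIntegrable_rpow' hr (a := b - c) (b := b - d)).comp_sub_left b

theorem intervalIntegrable_sub_rpow {a r : ℝ} (hr : -1 < r) (c d : ℝ) :
    IntervalIntegrable (fun t => (t - a) ^ r) volume c d := by
  simpa only [sub_add_cancel] using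
    (intervalIntegral.intervalIntegrable_rpow' hr (a := c - a) (b := d - a)).comp_sub_right a

theorem exists_continuousOn_eqOn_Ioo_of_hasDerivAt {f f' : ℝ → ℝ} {a b : ℝ}
    (hf : ∀ x ∈ Ioo a b, HasDerivAt f (f' x) x) (hf' : IntervalIntegrable f' volume a b) :
    ∃ F : ℝ → ℝ, ContinuousOn F (Icc a b) ∧ EqOn f F (Ioo a b) ∧
      ∀ x ∈ Ioo a b, HasDerivAt F (f' x) x := by
  set m := (a + b) / 2 with hm_def
  set F : ℝ → ℝ := fun t => f m + ∫ s in m..t, f' s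
  have hm : m ∈ uIcc a b := by
    rcases le_total a b with h | h
    · exact mem_uIcc_of_le (by linarith) (by linarith)
    · exact mem_uIcc_of_ge (by linarith) (by linarith)
  have hfF : EqOn f F (Ioo a b) := fun x hx => by
    have hmx : uIcc m x ⊆ Ioo a b := by
      refine ordConnected_Ioo.uIcc_subset ⟨?_, ?_⟩ hx <;> linarith [hx.1, hx.2]
    have := integral_eq_sub_of_hasDerivAt (fun t ht => hf t (hmx ht))
      (hf'.mono_set (hmx.trans (Ioo_subset_Icc_self.trans Icc_subset_uIcc)))
    simp only [F, this, add_sub_cancel]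
  refine ⟨F, ?_, hfF, fun x hx => (hf x hx).congr_of_eventuallyEq ?_⟩
  · exact (continuousOn_const.add (continuousOn_primitive_interval' hf' hm)).mono
      Icc_subset_uIcc
  · exact Filter.eventually_of_mem (Ioo_mem_nhds hx.1 hx.2) fun y hy => (hfF hy).symm

theorem integral_sub_mul_mul_sub {k g F : ℝ → ℝ} {c d : ℝ} (κ y : ℝ)
    (hkG : IntervalIntegrable (fun t => k t * (g t * F t)) volume c d)
    (hkg : IntervalIntegrable (fun t => k t * g t) volume c d)
    (hG : IntervalIntegrable (fun t => g t * F t) volume c d)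
    (hg : IntervalIntegrable g volume c d) :
    ∫ t in c..d, (k t - κ) * g t * (F t - y) =
      (∫ t in c..d, k t * (g t * F t)) - κ * (∫ t in c..d, g t * F t) -
        y * ((∫ t in c..d, k t * g t) - κ * ∫ t in c..d, g t) := by
  calc ∫ t in c..d, (k t - κ) * g t * (F t - y)
      = ∫ t in c..d, (k t * (g t * F t) - κ * (g t * F t)) - y * (k t * g t - κ * g t) :=
        integral_congr fun t _ => by ring
    _ = _ := by
      rw [integral_sub (hkG.sub (hG.const_mul κ)) ((hkg.sub (hg.const_mul κ)).const_mul y),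
        intervalIntegral.integral_const_mul, integral_sub hkG (hG.const_mul κ),
        integral_sub hkg (hg.const_mul κ), intervalIntegral.integral_const_mul,
        intervalIntegral.integral_const_mul]

theorem second_fejer_lhs_eq {f F g : ℝ → ℝ} {a b m α : ℝ} (hα : 0 < α) (hm : m ∈ Ioo a b)
    (hg : ContinuousOn g (Icc a b)) (hF : ContinuousOn F (Icc a b)) (hfF : EqOn f F (Ioo a b)) :
    f m *
        (-((1 / Real.Gamma α) * ∫ t in a..b, (b - t) ^ (α - 1) * g t) -
          (1 / Real.Gamma α) * (∫ t in a..b, (t - a) ^ (α - 1) * g t) +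
          (1 / Real.Gamma α) * (∫ t in m..b, (b - t) ^ (α - 1) * g t) +
          (1 / Real.Gamma α) * (∫ t in a..m, (t - a) ^ (α - 1) * g t) +
          ((b - a) ^ (α - 1) / Real.Gamma α) * ∫ s in a..b, g s) +
      (1 / Real.Gamma α) * (∫ t in a..b, (b - t) ^ (α - 1) * (g t * f t)) +
      (1 / Real.Gamma α) * (∫ t in a..b, (t - a) ^ (α - 1) * (g t * f t)) -
      (1 / Real.Gamma α) * (∫ t in m..b, (b - t) ^ (α - 1) * (g t * f t)) -
      (1 / Real.Gamma α) * (∫ t in a..m, (t - a) ^ (α - 1) * (g t * f t)) -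
      ((b - a) ^ (α - 1) / Real.Gamma α) * ∫ t in a..b, g t * f t =
    (1 / Real.Gamma α) *
      ((∫ t in a..m, ((b - t) ^ (α - 1) - (b - a) ^ (α - 1)) * g t * (F t - F m)) +
        ∫ t in m..b, ((t - a) ^ (α - 1) - (b - a) ^ (α - 1)) * g t * (F t - F m)) := by
  have ha : a ∈ Icc a b := left_mem_Icc.2 (hm.1.trans hm.2).le
  have hb : b ∈ Icc a b := right_mem_Icc.2 (hm.1.trans hm.2).le
  have hm' : m ∈ Icc a b := Ioo_subset_Icc_self hm
  have hr : -1 < α - 1 := by linarith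
  have hf_F : ∀ k : ℝ → ℝ, ∀ c ∈ Icc a b, ∀ d ∈ Icc a b,
      ∫ t in c..d, k t * (g t * f t) = ∫ t in c..d, k t * (g t * F t) :=
    fun k c hc d hd => integral_congr_uIoo fun t ht => by
      rw [hfF ⟨(le_min hc.1 hd.1).trans_lt ht.1, ht.2.trans_le (max_le hc.2 hd.2)⟩]
  have hgf : ∫ t in a..b, g t * f t = ∫ t in a..b, g t * F t := by
    simpa only [one_mul] using hf_F (fun _ => 1) a ha b hb
  rw [hfF hm, hf_F (fun t => (b - t) ^ (α - 1)) a ha b hb,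
    hf_F (fun t => (t - a) ^ (α - 1)) a ha b hb, hf_F (fun t => (b - t) ^ (α - 1)) m hm' b hb,
    hf_F (fun t => (t - a) ^ (α - 1)) a ha m hm', hgf]
  have hint : ∀ ψ : ℝ → ℝ, ContinuousOn ψ (Icc a b) → ∀ c ∈ Icc a b, ∀ d ∈ Icc a b,
      IntervalIntegrable (fun t => (b - t) ^ (α - 1) * ψ t) volume c d ∧
        IntervalIntegrable (fun t => (t - a) ^ (α - 1) * ψ t) volume c d ∧
        IntervalIntegrable ψ volume c d := fun ψ hψ c hc d hd => by
    have hψ' := hψ.mono (uIcc_subset_Icc hc hd)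
    exact ⟨(intervalIntegrable_rpow_sub hr c d).mul_continuousOn hψ',
      (intervalIntegrable_sub_rpow hr c d).mul_continuousOn hψ', hψ'.intervalIntegrable⟩
  obtain ⟨hg₁, hg₂, hg₀⟩ := hint g hg a ha m hm'
  obtain ⟨hg₁', hg₂', hg₀'⟩ := hint g hg m hm' b hb
  obtain ⟨hG₁, hG₂, hG₀⟩ := hint (fun t => g t * F t) (hg.mul hF) a ha m hm'
  obtain ⟨hG₁', hG₂', hG₀'⟩ := hint (fun t => g t * F t) (hg.mul hF) m hm' b hb
  rw [← integral_add_adjacent_intervals hg₁ hg₁', ← integral_add_adjacent_intervals hg₂ hg₂',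
    ← integral_add_adjacent_intervals hg₀ hg₀', ← integral_add_adjacent_intervals hG₁ hG₁',
    ← integral_add_adjacent_intervals hG₂ hG₂', ← integral_add_adjacent_intervals hG₀ hG₀',
    integral_sub_mul_mul_sub _ _ hG₁ hg₁ hG₀ hg₀, integral_sub_mul_mul_sub _ _ hG₂' hg₂' hG₀' hg₀']
  ring

section IntegrationByParts

variable {c d : ℝ} {φ F f' : ℝ → ℝ}

theorem integral_mul_sub_right_eq (hcd : c ≤ d) (hφ : ContinuousOn φ (Icc c d))
    (hF : ContinuousOn F (Icc c d)) (hF' : ∀ x ∈ Ioo c d, HasDerivAt F (f' x) x)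
    (hf' : IntervalIntegrable f' volume c d) :
    ∫ t in c..d, φ t * (F t - F d) = -∫ t in c..d, (∫ s in c..t, φ s) * f' t := by
  have hφi : IntervalIntegrable φ volume c d := hφ.intervalIntegrable_of_Icc hcd
  have hparts := integral_mul_deriv_eq_deriv_mul_of_hasDerivAt
    (u := fun t => ∫ s in c..t, φ s) (v := fun t => F t - F d)
    (continuousOn_primitive_interval' hφi left_mem_uIcc)
    (by rw [uIcc_of_le hcd]; exact hF.sub continuousOn_const)
    (fun x hx => by
      rw [min_eq_left hcd, max_eq_right hcd] at hx
      exact integral_hasDerivAt_right (hφi.mono_set (uIcc_subset_uIcc left_mem_uIcc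
          (by rw [uIcc_of_le hcd]; exact Ioo_subset_Icc_self hx)))
        ((hφ.mono Ioo_subset_Icc_self).stronglyMeasurableAtFilter isOpen_Ioo x hx)
        (hφ.continuousAt (Icc_mem_nhds hx.1 hx.2)))
    (fun x hx => by
      rw [min_eq_left hcd, max_eq_right hcd] at hx
      exact (hF' x hx).sub_const _)
    hφi hf'
  simp only [integral_same, sub_self, mul_zero, zero_mul, zero_sub] at hparts
  rw [hparts, neg_neg]

theorem integral_mul_sub_left_eq (hcd : c ≤ d) (hφ : ContinuousOn φ (Icc c d))
    (hF : ContinuousOn F (Icc c d)) (hF' : ∀ x ∈ Ioo c d, HasDerivAt F (f' x) x)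
    (hf' : IntervalIntegrable f' volume c d) :
    ∫ t in c..d, φ t * (F t - F c) = ∫ t in c..d, (∫ s in t..d, φ s) * f' t := by
  have hφi : IntervalIntegrable φ volume c d := hφ.intervalIntegrable_of_Icc hcd
  have hparts := integral_mul_deriv_eq_deriv_mul_of_hasDerivAt
    (u := fun t => ∫ s in t..d, φ s) (u' := fun t => -φ t) (v := fun t => F t - F c)
    (continuousOn_primitive_interval_left (by rw [uIcc_of_le hcd]; exact hφ.integrableOn_Icc))
    (by rw [uIcc_of_le hcd]; exact hF.sub continuousOn_const)
    (fun x hx => by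
      rw [min_eq_left hcd, max_eq_right hcd] at hx
      exact integral_hasDerivAt_left (hφi.mono_set (uIcc_subset_uIcc
          (by rw [uIcc_of_le hcd]; exact Ioo_subset_Icc_self hx) right_mem_uIcc))
        ((hφ.mono Ioo_subset_Icc_self).stronglyMeasurableAtFilter isOpen_Ioo x hx)
        (hφ.continuousAt (Icc_mem_nhds hx.1 hx.2)))
    (fun x hx => by
      rw [min_eq_left hcd, max_eq_right hcd] at hx
      exact (hF' x hx).sub_const _)
    hφi.neg hf'
  simp only [integral_same, sub_self, mul_zero, zero_mul, neg_mul, intervalIntegral.integral_neg,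
    zero_sub, neg_neg] at hparts
  exact hparts.symm

theorem abs_integral_mul_le (hcd : c ≤ d) {U V H : ℝ → ℝ} (hUV : ∀ t ∈ Icc c d, |U t| ≤ V t)
    (hf'H : ∀ t ∈ Icc c d, |f' t| ≤ H t)
    (hVH : IntervalIntegrable (fun t => V t * H t) volume c d) :
    |∫ t in c..d, U t * f' t| ≤ ∫ t in c..d, V t * H t := by
  refine Real.norm_eq_abs _ ▸ norm_integral_le_of_norm_le hcd (ae_of_all _ fun t ht => ?_) hVH
  have ht' : t ∈ Icc c d := Ioc_subset_Icc_self ht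
  rw [Real.norm_eq_abs, abs_mul]
  exact mul_le_mul (hUV t ht') (hf'H t ht') (abs_nonneg _) ((abs_nonneg _).trans (hUV t ht'))

theorem integral_mul_sub_right_le (hcd : c ≤ d) (hφ : ContinuousOn φ (Icc c d))
    (hF : ContinuousOn F (Icc c d)) (hF' : ∀ x ∈ Ioo c d, HasDerivAt F (f' x) x)
    (hf' : IntervalIntegrable f' volume c d) {L H : ℝ → ℝ} (hφL : ∀ t ∈ Icc c d, |φ t| ≤ L t)
    (hL : IntervalIntegrable L volume c d) (hH : ContinuousOn H (Icc c d))
    (hf'H : ∀ t ∈ Icc c d, |f' t| ≤ H t) :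
    ∫ t in c..d, φ t * (F t - F d) ≤ ∫ t in c..d, (∫ s in c..t, L s) * H t := by
  rw [integral_mul_sub_right_eq hcd hφ hF hF' hf']
  refine (neg_le_abs _).trans (abs_integral_mul_le hcd (fun t ht => ?_) hf'H ?_)
  · simpa only [Real.norm_eq_abs] using norm_integral_le_of_norm_le (f := φ) ht.1
      (ae_of_all _ fun s hs => hφL s ⟨hs.1.le, hs.2.trans ht.2⟩)
      (hL.mono_set (uIcc_subset_uIcc left_mem_uIcc (by rwa [uIcc_of_le hcd])))
  · have hprim := continuousOn_primitive_interval' hL left_mem_uIcc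
    rw [uIcc_of_le hcd] at hprim
    exact (hprim.mul hH).intervalIntegrable_of_Icc hcd

theorem integral_mul_sub_left_le (hcd : c ≤ d) (hφ : ContinuousOn φ (Icc c d))
    (hF : ContinuousOn F (Icc c d)) (hF' : ∀ x ∈ Ioo c d, HasDerivAt F (f' x) x)
    (hf' : IntervalIntegrable f' volume c d) {L H : ℝ → ℝ} (hφL : ∀ t ∈ Icc c d, |φ t| ≤ L t)
    (hL : IntervalIntegrable L volume c d) (hH : ContinuousOn H (Icc c d))
    (hf'H : ∀ t ∈ Icc c d, |f' t| ≤ H t) :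
    ∫ t in c..d, φ t * (F t - F c) ≤ ∫ t in c..d, (∫ s in t..d, L s) * H t := by
  rw [integral_mul_sub_left_eq hcd hφ hF hF' hf']
  refine (le_abs_self _).trans (abs_integral_mul_le hcd (fun t ht => ?_) hf'H ?_)
  · simpa only [Real.norm_eq_abs] using norm_integral_le_of_norm_le (f := φ) ht.2
      (ae_of_all _ fun s hs => hφL s ⟨ht.1.trans hs.1.le, hs.2⟩)
      (hL.mono_set (uIcc_subset_uIcc (by rwa [uIcc_of_le hcd]) right_mem_uIcc))
  · have hprim := continuousOn_primitive_interval_left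
      ((intervalIntegrable_iff_integrableOn_Icc_of_le hcd).mp hL |>.mono_set
        (uIcc_of_le hcd).subset)
    rw [uIcc_of_le hcd] at hprim
    exact (hprim.mul hH).intervalIntegrable_of_Icc hcd

end IntegrationByParts

theorem fejer_left_half_le {f' g F : ℝ → ℝ} {a b m α : ℝ} (hab : a < b) (hα : 0 < α)
    (ham : a ≤ m) (hm : m ≤ (a + b) / 2) (hg : ContinuousOn g (Icc a b))
    (hF : ContinuousOn F (Icc a b)) (hF' : ∀ x ∈ Ioo a b, HasDerivAt F (f' x) x)
    (hf' : IntervalIntegrable f' volume a b) (hconv : ConvexOn ℝ (Icc a b) fun x => |f' x|) :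
    ∫ t in a..m, ((b - t) ^ (α - 1) - (b - a) ^ (α - 1)) * g t * (F t - F m) ≤
      sSup ((fun x => |g x|) '' Icc a m) / (b - a) *
        ∫ t in a..m, (∫ s in a..t, ((b - a) ^ (α - 1) - (b - s) ^ (α - 1) + (s - a) ^ (α - 1))) *
          ((b - t) * |f' a| + (t - a) * |f' b|) := by
  have hmb : m < b := by linarith
  have hsub : Icc a m ⊆ Icc a b := Icc_subset_Icc le_rfl hmb.le
  have hr : -1 < α - 1 := by linarith
  set M := sSup ((fun x => |g x|) '' Icc a m)
  have hφL : ∀ t ∈ Icc a m, |((b - t) ^ (α - 1) - (b - a) ^ (α - 1)) * g t| ≤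
      M * ((b - a) ^ (α - 1) - (b - t) ^ (α - 1) + (t - a) ^ (α - 1)) := fun t ht => by
    have hker := abs_rpow_sub_rpow_add_le (x := b - t) (y := t - a) (by linarith [ht.2])
      (by linarith [ht.1]) (by linarith [ht.2]) hr.le
    rw [sub_add_sub_cancel] at hker
    rw [abs_mul, mul_comm M]
    exact mul_le_mul hker ((continuous_abs.comp_continuousOn (hg.mono hsub)).le_sSup_image_Icc ht)
      (abs_nonneg _) ((abs_nonneg _).trans hker)
  calc _ ≤ ∫ t in a..m,
          (∫ s in a..t, M * ((b - a) ^ (α - 1) - (b - s) ^ (α - 1) + (s - a) ^ (α - 1))) *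
          (((b - t) * |f' a| + (t - a) * |f' b|) / (b - a)) :=
        integral_mul_sub_right_le ham
          (((ContinuousOn.rpow_const (by fun_prop) fun x hx =>
            Or.inl (sub_pos.2 (hx.2.trans_lt hmb)).ne').sub continuousOn_const).mul (hg.mono hsub))
          (hF.mono hsub) (fun x hx => hF' x ⟨hx.1, hx.2.trans hmb⟩)
          (hf'.mono_set (uIcc_subset_uIcc left_mem_uIcc ⟨by simp [ham], by simp [hmb.le]⟩)) hφL
          (((intervalIntegrable_const.sub (intervalIntegrable_rpow_sub hr a m)).add
            (intervalIntegrable_sub_rpow hr a m)).const_mul M)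
          (by fun_prop) (fun t ht => hconv.le_chord hab (hsub ht))
    _ = _ := by
      rw [← intervalIntegral.integral_const_mul]
      congr 1 with t
      rw [intervalIntegral.integral_const_mul]
      ring

theorem fejer_right_half_le {f' g F : ℝ → ℝ} {a b m α : ℝ} (hab : a < b) (hα : 0 < α)
    (hm : (a + b) / 2 ≤ m) (hmb : m ≤ b) (hg : ContinuousOn g (Icc a b))
    (hF : ContinuousOn F (Icc a b)) (hF' : ∀ x ∈ Ioo a b, HasDerivAt F (f' x) x)
    (hf' : IntervalIntegrable f' volume a b) (hconv : ConvexOn ℝ (Icc a b) fun x => |f' x|) :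
    ∫ t in m..b, ((t - a) ^ (α - 1) - (b - a) ^ (α - 1)) * g t * (F t - F m) ≤
      sSup ((fun x => |g x|) '' Icc m b) / (b - a) *
        ∫ t in m..b, (∫ s in t..b, ((b - s) ^ (α - 1) - (s - a) ^ (α - 1) + (b - a) ^ (α - 1))) *
          ((b - t) * |f' a| + (t - a) * |f' b|) := by
  have ham : a < m := by linarith
  have hsub : Icc m b ⊆ Icc a b := Icc_subset_Icc ham.le le_rfl
  have hr : -1 < α - 1 := by linarith
  set M := sSup ((fun x => |g x|) '' Icc m b)
  have hφL : ∀ t ∈ Icc m b, |((t - a) ^ (α - 1) - (b - a) ^ (α - 1)) * g t| ≤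
      M * ((b - t) ^ (α - 1) - (t - a) ^ (α - 1) + (b - a) ^ (α - 1)) := fun t ht => by
    have hker := abs_rpow_sub_rpow_add_le (x := t - a) (y := b - t) (by linarith [ht.1])
      (by linarith [ht.2]) (by linarith [ht.1]) hr.le
    rw [add_comm, sub_add_sub_cancel] at hker
    rw [abs_mul, mul_comm M]
    exact mul_le_mul (hker.trans_eq (by ring))
      ((continuous_abs.comp_continuousOn (hg.mono hsub)).le_sSup_image_Icc ht)
      (abs_nonneg _) ((abs_nonneg _).trans (hker.trans_eq (by ring)))
  calc _ ≤ ∫ t in m..b,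
          (∫ s in t..b, M * ((b - s) ^ (α - 1) - (s - a) ^ (α - 1) + (b - a) ^ (α - 1))) *
          (((b - t) * |f' a| + (t - a) * |f' b|) / (b - a)) :=
        integral_mul_sub_left_le hmb
          (((ContinuousOn.rpow_const (by fun_prop) fun x hx =>
            Or.inl (sub_pos.2 (ham.trans_le hx.1)).ne').sub continuousOn_const).mul (hg.mono hsub))
          (hF.mono hsub) (fun x hx => hF' x ⟨ham.trans hx.1, hx.2⟩)
          (hf'.mono_set (uIcc_subset_uIcc ⟨by simp [ham.le], by simp [hmb]⟩ right_mem_uIcc)) hφL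
          ((((intervalIntegrable_rpow_sub hr m b).sub (intervalIntegrable_sub_rpow hr m b)).add
            intervalIntegrable_const).const_mul M)
          (by fun_prop) (fun t ht => hconv.le_chord hab (hsub ht))
    _ = _ := by
      rw [← intervalIntegral.integral_const_mul]
      congr 1 with t
      rw [intervalIntegral.integral_const_mul]
      ring

theorem second_fejer_bound
    (f f' g : ℝ → ℝ) (a b α : ℝ) (hab : a < b) (hα : 0 < α)
    (hf : ∀ x ∈ Set.Ioo a b, HasDerivAt f (f' x) x)
    (hf' : IntervalIntegrable f' MeasureTheory.volume a b)
    (hconv : ConvexOn ℝ (Set.Icc a b) (fun x => |f' x|))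
    (hg : ContinuousOn g (Set.Icc a b)) :
    f ((a + b) / 2) *
        (-((1 / Real.Gamma α) * ∫ t in a..b, (b - t) ^ (α - 1) * g t) -
          (1 / Real.Gamma α) * (∫ t in a..b, (t - a) ^ (α - 1) * g t) +
          (1 / Real.Gamma α) * (∫ t in ((a + b) / 2)..b, (b - t) ^ (α - 1) * g t) +
          (1 / Real.Gamma α) * (∫ t in a..(a + b) / 2, (t - a) ^ (α - 1) * g t) +
          ((b - a) ^ (α - 1) / Real.Gamma α) * ∫ s in a..b, g s) +
      (1 / Real.Gamma α) * (∫ t in a..b, (b - t) ^ (α - 1) * (g t * f t)) +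
      (1 / Real.Gamma α) * (∫ t in a..b, (t - a) ^ (α - 1) * (g t * f t)) -
      (1 / Real.Gamma α) * (∫ t in ((a + b) / 2)..b, (b - t) ^ (α - 1) * (g t * f t)) -
      (1 / Real.Gamma α) * (∫ t in a..(a + b) / 2, (t - a) ^ (α - 1) * (g t * f t)) -
      ((b - a) ^ (α - 1) / Real.Gamma α) * ∫ t in a..b, g t * f t ≤
    (sSup ((fun x => |g x|) '' Set.Icc a ((a + b) / 2)) / ((b - a) * Real.Gamma α)) *
      (∫ t in a..(a + b) / 2,
        (∫ s in a..t, ((b - a) ^ (α - 1) - (b - s) ^ (α - 1) + (s - a) ^ (α - 1))) *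
          ((b - t) * |f' a| + (t - a) * |f' b|)) +
    (sSup ((fun x => |g x|) '' Set.Icc ((a + b) / 2) b) / ((b - a) * Real.Gamma α)) *
      (∫ t in ((a + b) / 2)..b,
        (∫ s in t..b, ((b - s) ^ (α - 1) - (s - a) ^ (α - 1) + (b - a) ^ (α - 1))) *
          ((b - t) * |f' a| + (t - a) * |f' b|)) := by
  obtain ⟨F, hFc, hfF, hF'⟩ := exists_continuousOn_eqOn_Ioo_of_hasDerivAt hf hf'
  have hA := fejer_left_half_le hab hα (by linarith) le_rfl hg hFc hF' hf' hconv
  have hB := fejer_right_half_le hab hα le_rfl (by linarith) hg hFc hF' hf' hconv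
  have hΓ : 0 ≤ 1 / Real.Gamma α := (one_div_pos.2 (Real.Gamma_pos_of_pos hα)).le
  rw [second_fejer_lhs_eq hα ⟨by linarith, by linarith⟩ hg hFc hfF]
  calc _ ≤ 1 / Real.Gamma α * (_ + _) := mul_le_mul_of_nonneg_left (add_le_add hA hB) hΓ
    _ = _ := by simp only [div_eq_mul_inv, mul_inv]; ring
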